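/- Let α > 2 be a real number. Then the one-dimensional integral ∫₀^∞ t·(1 + 2t^α)/(1 + t^α)² dt converges and equals (1 + 2/α) · (1/α) · Γ(2/α) · Γ(1 − 2/α). -/

import Mathlib

open MeasureTheory Real Set Function

/-! Substituting `y = t^α` turns the integral into `(1/α) ∫₀^∞ y^(s-1) (1+2y)/(1+y)² dy` with
`s = 2/α ∈ (0,1)`. The partial fraction `(1+2y)/(1+y)² = 2/(1+y) - 1/(1+y)²` reduces this to two
Beta integrals of the second kind, `∫₀^∞ y^(a-1) (1+y)^(-c) dy = Γ(a) Γ(c-a) / Γ(c)` (proved by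
Fubini from the Gamma integral), and `2 Γ(s) Γ(1-s) - Γ(s) Γ(2-s) = (1+s) Γ(s) Γ(1-s)`. -/

lemma integral_rpow_mul_exp_neg_mul_Ioi' {s r : ℝ} (hs : 0 < s) (hr : 0 < r) :
    ∫ t in Ioi 0, t ^ (s - 1) * exp (-(r * t)) = r ^ (-s) * Gamma s := by
  rw [integral_rpow_mul_exp_neg_mul_Ioi hs hr, one_div, inv_rpow hr.le, rpow_neg hr.le]

lemma integrableOn_rpow_mul_one_add_rpow_neg {a c : ℝ} (ha : 0 < a) (hac : a < c) :
    IntegrableOn (fun u : ℝ => u ^ (a - 1) * (1 + u) ^ (-c)) (Ioi 0) := by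
  have hmeas : AEStronglyMeasurable (fun u : ℝ => u ^ (a - 1) * (1 + u) ^ (-c))
      (volume.restrict (Ioi 0)) :=
    (by fun_prop : Measurable fun u : ℝ => u ^ (a - 1) * (1 + u) ^ (-c)).aestronglyMeasurable
  rw [← Ioc_union_Ioi_eq_Ioi zero_le_one, integrableOn_union]
  constructor
  · have near_zero : IntegrableOn (fun u : ℝ => u ^ (a - 1)) (Ioc 0 1) := by
      simpa [intervalIntegrable_iff, uIoc_of_le zero_le_one] using
        intervalIntegral.intervalIntegrable_rpow' (a := 0) (b := 1) (by linarith : -1 < a - 1)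
    refine near_zero.mono' (hmeas.mono_measure (Measure.restrict_mono Ioc_subset_Ioi_self le_rfl))
      ((ae_restrict_mem measurableSet_Ioc).mono fun u hu => ?_)
    rw [norm_of_nonneg (by have := hu.1; positivity)]
    exact mul_le_of_le_one_right (rpow_nonneg hu.1.le _)
      (rpow_le_one_of_one_le_of_nonpos (le_add_of_nonneg_right hu.1.le) (by linarith))
  · have near_infty : IntegrableOn (fun u : ℝ => u ^ (a - 1) * u ^ (-c)) (Ioi 1) :=
      (integrableOn_Ioi_rpow_of_lt (by linarith : a - 1 + -c < -1) one_pos).congr_fun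
        (fun u (hu : 1 < u) => by rw [← rpow_add (by linarith)]) measurableSet_Ioi
    refine near_infty.mono'
      (hmeas.mono_measure (Measure.restrict_mono (Ioi_subset_Ioi zero_le_one) le_rfl))
      ((ae_restrict_mem measurableSet_Ioi).mono fun u hu => ?_)
    have hu0 : (0 : ℝ) < u := one_pos.trans hu
    rw [norm_of_nonneg (by positivity)]
    exact mul_le_mul_of_nonneg_left (rpow_le_rpow_of_nonpos hu0 (by linarith) (by linarith))
      (rpow_nonneg hu0.le _)

theorem integral_rpow_mul_one_add_rpow_neg {a c : ℝ} (ha : 0 < a) (hac : a < c) :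
    ∫ u in Ioi 0, u ^ (a - 1) * (1 + u) ^ (-c) = Gamma a * Gamma (c - a) / Gamma c := by
  have hc : 0 < c := ha.trans hac
  set μ := volume.restrict (Ioi (0 : ℝ))
  -- `Γ(c) (1 + u)^(-c)` is the Gamma integral `∫ t^(c-1) e^(-(1+u)t) dt`; exchange the order
  set F : ℝ → ℝ → ℝ := fun u t => u ^ (a - 1) * (t ^ (c - 1) * exp (-((1 + u) * t)))
  have inner_t : ∀ u ∈ Ioi (0 : ℝ), ∫ t, F u t ∂μ = Gamma c * (u ^ (a - 1) * (1 + u) ^ (-c)) :=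
    fun u (hu : 0 < u) => by
      rw [integral_const_mul, integral_rpow_mul_exp_neg_mul_Ioi' hc (by linarith)]; ring
  have inner_u : ∀ t ∈ Ioi (0 : ℝ),
      ∫ u, F u t ∂μ = Gamma a * (t ^ (c - a - 1) * exp (-(1 * t))) := fun t (ht : 0 < t) => by
    have split (u : ℝ) :
        F u t = t ^ (c - 1) * exp (-t) * (u ^ (a - 1) * exp (-(t * u))) := by
      simp only [F]
      rw [show -((1 + u) * t) = -t + -(t * u) by ring, exp_add]
      ring
    simp only [split]
    rw [integral_const_mul, integral_rpow_mul_exp_neg_mul_Ioi' ha ht, one_mul,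
      show c - a - 1 = (c - 1) + -a by ring, rpow_add ht]
    ring
  have F_int : Integrable (uncurry F) (μ.prod μ) := by
    refine (integrable_prod_iff (by fun_prop : Measurable (uncurry F)).aestronglyMeasurable).2
      ⟨(ae_restrict_mem measurableSet_Ioi).mono fun u (hu : 0 < u) => ?_, ?_⟩
    · refine ((integrableOn_rpow_mul_exp_neg_mul_rpow (p := 1) (s := c - 1) (b := 1 + u)
        (by linarith) one_pos (by linarith)).const_mul (u ^ (a - 1))).congr
        (ae_of_all _ fun t => ?_)
      simp only [F, uncurry_apply_pair, rpow_one, neg_mul]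
    · refine ((integrableOn_rpow_mul_one_add_rpow_neg ha hac).const_mul (Gamma c)).congr
        ((ae_restrict_mem measurableSet_Ioi).mono fun u hu => ?_)
      dsimp only
      rw [← inner_t u hu]
      refine setIntegral_congr_fun measurableSet_Ioi fun t (ht : 0 < t) => ?_
      simp only [uncurry_apply_pair]
      exact (norm_of_nonneg (by have : 0 < u := hu; positivity)).symm
  have swap := integral_integral_swap F_int
  rw [setIntegral_congr_fun measurableSet_Ioi inner_t,
    setIntegral_congr_fun measurableSet_Ioi inner_u, integral_const_mul, integral_const_mul,
    integral_rpow_mul_exp_neg_mul_Ioi' (by linarith) one_pos, one_rpow, one_mul] at swap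
  rw [eq_div_iff (Gamma_pos_of_pos hc).ne', ← swap]
  ring

lemma rpow_sub_one_mul_comp_rpow (g : ℝ → ℝ) {p : ℝ} (hp : p ≠ 0) (q : ℝ) {x : ℝ} (hx : 0 < x) :
    x ^ (q - 1) * g (x ^ p) = x ^ (p - 1) * ((x ^ p) ^ (q / p - 1) * g (x ^ p)) := by
  rw [← rpow_mul hx.le, ← mul_assoc, ← rpow_add hx, mul_sub, mul_div_cancel₀ _ hp]
  ring_nf

theorem integrableOn_rpow_mul_comp_rpow_Ioi_iff (g : ℝ → ℝ) {p : ℝ} (hp : p ≠ 0) (q : ℝ) :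
    IntegrableOn (fun x => x ^ (q - 1) * g (x ^ p)) (Ioi 0) ↔
      IntegrableOn (fun y => y ^ (q / p - 1) * g y) (Ioi 0) := by
  rw [← integrableOn_Ioi_comp_rpow_iff' (fun y => y ^ (q / p - 1) * g y) hp]
  exact integrableOn_congr_fun (fun x hx => rpow_sub_one_mul_comp_rpow g hp q hx) measurableSet_Ioi

theorem integral_rpow_mul_comp_rpow_Ioi (g : ℝ → ℝ) {p : ℝ} (hp : p ≠ 0) (q : ℝ) :
    ∫ x in Ioi 0, x ^ (q - 1) * g (x ^ p) = |p|⁻¹ * ∫ y in Ioi 0, y ^ (q / p - 1) * g y := by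
  rw [← integral_comp_rpow_Ioi (fun y => y ^ (q / p - 1) * g y) hp, ← integral_const_mul]
  refine setIntegral_congr_fun measurableSet_Ioi fun x (hx : 0 < x) => ?_
  rw [rpow_sub_one_mul_comp_rpow g hp q hx, smul_eq_mul, mul_assoc,
    inv_mul_cancel_left₀ (abs_pos.2 hp).ne']

lemma rpow_mul_one_add_two_mul_div_sq_eqOn (s : ℝ) :
    EqOn (fun y : ℝ => y ^ (s - 1) * ((1 + 2 * y) / (1 + y) ^ 2))
      (fun y => 2 * (y ^ (s - 1) * (1 + y) ^ (-1 : ℝ)) - y ^ (s - 1) * (1 + y) ^ (-2 : ℝ))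
      (Ioi 0) := fun y (hy : 0 < y) => by
  have hy₁ : 0 < 1 + y := by linarith
  dsimp only
  rw [rpow_neg_one, rpow_neg hy₁.le, rpow_two]
  field_simp
  ring

theorem integrableOn_rpow_mul_one_add_two_mul_div_sq {s : ℝ} (hs₀ : 0 < s) (hs₁ : s < 1) :
    IntegrableOn (fun y : ℝ => y ^ (s - 1) * ((1 + 2 * y) / (1 + y) ^ 2)) (Ioi 0) :=
  IntegrableOn.congr_fun (((integrableOn_rpow_mul_one_add_rpow_neg hs₀ hs₁).const_mul 2).sub
    (integrableOn_rpow_mul_one_add_rpow_neg hs₀ (by linarith : s < 2)))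
    (rpow_mul_one_add_two_mul_div_sq_eqOn s).symm measurableSet_Ioi

theorem integral_rpow_mul_one_add_two_mul_div_sq {s : ℝ} (hs₀ : 0 < s) (hs₁ : s < 1) :
    ∫ y in Ioi 0, y ^ (s - 1) * ((1 + 2 * y) / (1 + y) ^ 2) =
      (1 + s) * Gamma s * Gamma (1 - s) := by
  rw [setIntegral_congr_fun measurableSet_Ioi (rpow_mul_one_add_two_mul_div_sq_eqOn s),
    integral_sub ((integrableOn_rpow_mul_one_add_rpow_neg hs₀ hs₁).const_mul 2)
      (integrableOn_rpow_mul_one_add_rpow_neg hs₀ (by linarith : s < 2)),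
    integral_const_mul, integral_rpow_mul_one_add_rpow_neg hs₀ hs₁,
    integral_rpow_mul_one_add_rpow_neg hs₀ (by linarith : s < 2),
    show (2 : ℝ) - s = 1 - s + 1 by ring, Gamma_add_one (by linarith), Gamma_one, Gamma_two]
  ring

theorem stmt_2 (α : ℝ) (hα : 2 < α) :
    IntegrableOn (fun t : ℝ => t * (1 + 2 * t ^ α) / (1 + t ^ α) ^ 2) (Set.Ioi 0) ∧
    (∫ t in Set.Ioi (0 : ℝ), t * (1 + 2 * t ^ α) / (1 + t ^ α) ^ 2) =
      (1 + 2 / α) * (1 / α) * Gamma (2 / α) * Gamma (1 - 2 / α) := by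
  have hα₀ : 0 < α := by linarith
  have hs₀ : 0 < 2 / α := by positivity
  have hs₁ : 2 / α < 1 := (div_lt_one hα₀).2 hα
  have integrand_eq : (fun t : ℝ => t * (1 + 2 * t ^ α) / (1 + t ^ α) ^ 2) =
      fun t => t ^ ((2 : ℝ) - 1) * ((1 + 2 * t ^ α) / (1 + t ^ α) ^ 2) := by
    norm_num [mul_div_assoc]
  rw [integrand_eq, integrableOn_rpow_mul_comp_rpow_Ioi_iff (fun y => (1 + 2 * y) / (1 + y) ^ 2)
    hα₀.ne', integral_rpow_mul_comp_rpow_Ioi (fun y => (1 + 2 * y) / (1 + y) ^ 2) hα₀.ne',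
    integral_rpow_mul_one_add_two_mul_div_sq hs₀ hs₁, abs_of_pos hα₀]
  exact ⟨integrableOn_rpow_mul_one_add_two_mul_div_sq hs₀ hs₁, by ring⟩
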